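/- arXiv:1210.5037 — 2 statements merged into one kernel-verified Lean document; each statement's English description precedes it below -/
import Mathlib

section
/- Fix integers ℓ ≥ 2 and r ≥ 0. There is no chain complex (C_*, ∂) of finite-dimensional ℚ-vector spaces with C_j = 0 for j < 0, C_{2j} ≅ ℚ^{ℓ-1} and C_{2j+1} ≅ ℚ^r for all j ≥ 0, whose homology satisfies H_0 = 0, H_{2j} ≅ ℚ for all j ≥ 1, and H_{odd} = 0. -/
/-!
Write `a j` for the rank of the differential into degree `2j` and `b j` for the rank of the
differential into degree `2j+1`. Rank–nullity in degree `2j+1` with `H_{2j+1} = 0` gives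
`a j + b j = r`, and in degree `2j+2` with `H_{2j+2} ≅ ℚ` gives `b j + a (j+1) + 1 = ℓ - 1`.
Since `H_0 = 0`, `a 0 = ℓ - 1 ≤ r`, so `a (j+1) + 1 = a j - (r - a 0) ≤ a j`:
the ranks `a j` decrease strictly, which is impossible in `ℕ`.
-/

open Module LinearMap

theorem finrank_range_add_finrank_range_add_of_finrank_ker {K U V W : Type*} [DivisionRing K]
    [AddCommGroup U] [Module K U] [AddCommGroup V] [Module K V] [AddCommGroup W] [Module K W]
    [FiniteDimensional K V] (f : V →ₗ[K] W) (g : U →ₗ[K] V) {h : ℕ}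
    (hker : finrank K (ker f) = finrank K (range g) + h) :
    finrank K (range f) + finrank K (range g) + h = finrank K V := by
  rw [← f.finrank_range_add_finrank_ker, hker, add_assoc]

theorem stmt3_general (ℓ r : ℕ)
    (C : ℕ → Type) [∀ k, AddCommGroup (C k)] [∀ k, Module ℚ (C k)]
    [∀ k, FiniteDimensional ℚ (C k)]
    (d : ∀ k, C (k + 1) →ₗ[ℚ] C k)
    (heven : ∀ j : ℕ, Module.finrank ℚ (C (2 * j)) = ℓ - 1)
    (hodd : ∀ j : ℕ, Module.finrank ℚ (C (2 * j + 1)) = r)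
    -- `H_0 = 0` : the range of `d 0` is all of `C 0` (the kernel of the zero boundary map)
    (hH0 : Module.finrank ℚ (LinearMap.range (d 0)) = Module.finrank ℚ (C 0))
    -- `H_{2j+2} ≅ ℚ` for all `j ≥ 0`, i.e. `H` is `ℚ` in each even degree `≥ 2`
    (hHeven : ∀ j : ℕ, Module.finrank ℚ (LinearMap.ker (d (2 * j + 1))) =
      Module.finrank ℚ (LinearMap.range (d (2 * j + 2))) + 1)
    -- `H_{2j+1} = 0` for all `j ≥ 0`
    (hHodd : ∀ j : ℕ, Module.finrank ℚ (LinearMap.ker (d (2 * j))) =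
      Module.finrank ℚ (LinearMap.range (d (2 * j + 1)))) :
    False := by
  set a : ℕ → ℕ := fun j ↦ finrank ℚ (range (d (2 * j)))
  set b : ℕ → ℕ := fun j ↦ finrank ℚ (range (d (2 * j + 1)))
  have hodd_rank : ∀ j, a j + b j = r := fun j ↦
    (finrank_range_add_finrank_range_add_of_finrank_ker (d (2 * j)) (d (2 * j + 1))
        (h := 0) (hHodd j)).trans (hodd j)
  have heven_rank : ∀ j, b j + a (j + 1) + 1 = ℓ - 1 := fun j ↦
    (finrank_range_add_finrank_range_add_of_finrank_ker (d (2 * j + 1)) (d (2 * j + 2))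
        (hHeven j)).trans (heven (j + 1))
  have ha0 : a 0 = ℓ - 1 := hH0.trans (heven 0)
  have hanti : StrictAnti a := strictAnti_nat_of_succ_lt fun j ↦ by
    have := hodd_rank 0
    have := hodd_rank j
    have := heven_rank j
    omega
  exact not_strictAnti_of_wellFoundedLT a hanti

/-- For `ℓ ≥ 2` and `r ≥ 0` there is no chain complex of finite-dimensional
`ℚ`-vector spaces, vanishing in negative degrees, with `C_{2j} ≅ ℚ^{ℓ-1}` and
`C_{2j+1} ≅ ℚ^r`, whose homology is `0` in degree `0` and in all odd degrees, and `ℚ`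
in each even degree `≥ 2`.  (Homology conditions are expressed via dimensions of kernels
and ranges; the differential `d k` maps `C (k+1)` to `C k`, and the boundary operator on
`C 0` is zero since the complex vanishes in negative degrees.) -/
theorem stmt3 (ℓ r : ℕ) (hℓ : 2 ≤ ℓ)
    (C : ℕ → Type) [∀ k, AddCommGroup (C k)] [∀ k, Module ℚ (C k)]
    [∀ k, FiniteDimensional ℚ (C k)]
    (d : ∀ k, C (k + 1) →ₗ[ℚ] C k)
    (hdd : ∀ k, (d k).comp (d (k + 1)) = 0)
    (heven : ∀ j : ℕ, Module.finrank ℚ (C (2 * j)) = ℓ - 1)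
    (hodd : ∀ j : ℕ, Module.finrank ℚ (C (2 * j + 1)) = r)
    -- `H_0 = 0` : the range of `d 0` is all of `C 0` (the kernel of the zero boundary map)
    (hH0 : Module.finrank ℚ (LinearMap.range (d 0)) = Module.finrank ℚ (C 0))
    -- `H_{2j+2} ≅ ℚ` for all `j ≥ 0`, i.e. `H` is `ℚ` in each even degree `≥ 2`
    (hHeven : ∀ j : ℕ, Module.finrank ℚ (LinearMap.ker (d (2 * j + 1))) =
      Module.finrank ℚ (LinearMap.range (d (2 * j + 2))) + 1)
    -- `H_{2j+1} = 0` for all `j ≥ 0`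
    (hHodd : ∀ j : ℕ, Module.finrank ℚ (LinearMap.ker (d (2 * j))) =
      Module.finrank ℚ (LinearMap.range (d (2 * j + 1)))) :
    False :=
  stmt3_general ℓ r C d heven hodd hH0 hHeven hHodd
end

section
/- Let λ ∈ (0,1) be rational and let a_κ = κ + ⌊κλ⌋ (κ = 1, 2, 3, ...). Suppose that whenever a_{κ+1} = a_κ + 2 one has (κ+1)λ ∈ ℤ or κλ ∈ ℤ. Then λ = 1/ℓ for some integer ℓ ≥ 2. -/
lemma floor_nat_div_real (n d : ℕ) : ⌊((n : ℝ) / (d : ℝ))⌋ = (n : ℤ) / (d : ℤ) := by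
  have h := Rat.floor_cast (α := ℝ) ((n : ℚ) / (d : ℚ))
  rw [Rat.cast_div, Rat.cast_natCast, Rat.cast_natCast] at h
  rw [h, Rat.floor_natCast_div_natCast]

/-- Let `λ ∈ (0,1)` be rational and set `a_κ = κ + ⌊κλ⌋`.  If whenever
`a_{κ+1} = a_κ + 2` one has `(κ+1)λ ∈ ℤ` or `κλ ∈ ℤ` (gaps in the sequence can only
occur at degenerate indices), then `λ = 1/ℓ` for some integer `ℓ ≥ 2`. -/
theorem stmt15 (lam : ℝ) (hrat : ∃ p q : ℤ, q ≠ 0 ∧ lam = (p : ℝ) / q)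
    (h0 : 0 < lam) (h1 : lam < 1)
    (hyp : ∀ κ : ℕ, 1 ≤ κ →
      ((κ : ℤ) + 1 + ⌊((κ : ℝ) + 1) * lam⌋ = (κ : ℤ) + ⌊(κ : ℝ) * lam⌋ + 2) →
      (∃ n : ℤ, ((κ : ℝ) + 1) * lam = n) ∨ (∃ n : ℤ, (κ : ℝ) * lam = n)) :
    ∃ ℓ : ℕ, 2 ≤ ℓ ∧ lam = 1 / (ℓ : ℝ) := by
  obtain ⟨p0, q0, hq0, hlam0⟩ := hrat
  set r : ℚ := (p0 : ℚ) / (q0 : ℚ) with hr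
  have hcast : (r : ℝ) = lam := by rw [hlam0, hr]; push_cast; ring
  have hrpos : 0 < r := by
    have : (0 : ℝ) < (r : ℝ) := by rw [hcast]; exact h0
    exact_mod_cast this
  have hrlt : r < 1 := by
    have : (r : ℝ) < 1 := by rw [hcast]; exact h1
    exact_mod_cast this
  set p : ℕ := r.num.toNat with hp
  set q : ℕ := r.den with hqdef
  have hnumpos : 0 < r.num := Rat.num_pos.mpr hrpos
  have hppos : 0 < p := by omega
  have hqpos : 0 < q := r.pos
  have hpq : p < q := by
    have := Rat.num_lt_denom_iff.mpr hrlt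
    omega
  have hcop : Nat.Coprime p q := by
    have h := r.reduced
    have h2 : r.num.toNat = r.num.natAbs := by omega
    rw [hp, h2]; exact h
  have hnum : (r.num : ℝ) = (p : ℝ) := by
    rw [hp]; exact_mod_cast (Int.toNat_of_nonneg hnumpos.le).symm
  have hlampq : lam = (p : ℝ) / (q : ℝ) := by
    rw [← hcast, Rat.cast_def, hnum, hqdef]
  -- key floor computation for any κ : ℕ
  have hfloor : ∀ κ : ℕ, ⌊(κ : ℝ) * lam⌋ = ((κ * p : ℕ) : ℤ) / (q : ℤ) := by
    intro κ
    rw [hlampq, ← mul_div_assoc, ← Nat.cast_mul, floor_nat_div_real]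
  -- integrality at κ forces q ∣ κ
  have hdvd : ∀ κ : ℕ, (∃ n : ℤ, (κ : ℝ) * lam = n) → q ∣ κ := by
    intro κ ⟨n, hn⟩
    rw [hlampq, ← mul_div_assoc, ← Nat.cast_mul] at hn
    have hq' : ((q : ℝ)) ≠ 0 := by positivity
    have h2 : ((κ * p : ℕ) : ℝ) = n * q := by field_simp at hn; rw [mul_comm (n : ℝ)]; exact_mod_cast hn
    have h3 : ((κ * p : ℕ) : ℤ) = n * q := by exact_mod_cast h2
    have h4 : q ∣ κ * p := by
      have : (q : ℤ) ∣ ((κ * p : ℕ) : ℤ) := ⟨n, by linarith [h3]⟩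
      exact_mod_cast this
    exact Nat.Coprime.dvd_of_dvd_mul_right hcop.symm h4
  -- show p = 1
  have hp1 : p = 1 := by
    by_contra hne
    have hp2 : 2 ≤ p := by omega
    have hq3 : 3 ≤ q := by omega
    set κ : ℕ := q / p with hκ
    have hκ1 : 1 ≤ κ := (Nat.one_le_div_iff hppos).mpr hpq.le
    have hnd : ¬ p ∣ q := fun hd => hne (Nat.eq_one_of_dvd_coprimes hcop dvd_rfl hd)
    have hmod : q % p < p := Nat.mod_lt q hppos
    have hmodpos : 0 < q % p := by
      rcases Nat.eq_zero_or_pos (q % p) with h | h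
      · exact absurd (Nat.dvd_of_mod_eq_zero h) hnd
      · exact h
    have hkey : p * κ + q % p = q := by rw [hκ]; exact Nat.div_add_mod q p
    have ht2 : 2 * κ ≤ p * κ := Nat.mul_le_mul_right κ hp2
    have htk : κ ≤ p * κ := Nat.le_mul_of_pos_left κ hppos
    have hlow : κ * p < q := by rw [Nat.mul_comm]; omega
    have hhigh : q ≤ (κ + 1) * p := by
      have : (κ + 1) * p = p * κ + p := by ring
      omega
    have hhigh2 : (κ + 1) * p < 2 * q := by
      have : (κ + 1) * p = p * κ + p := by ring
      omega
    have hκq : κ + 1 < q := by omega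
    have hf1 : ⌊(κ : ℝ) * lam⌋ = 0 := by
      rw [hfloor κ]
      exact Int.ediv_eq_zero_of_lt (by positivity) (by exact_mod_cast hlow)
    have hf2 : ⌊((κ : ℝ) + 1) * lam⌋ = 1 := by
      have hc : ((κ : ℝ) + 1) = ((κ + 1 : ℕ) : ℝ) := by push_cast; ring
      rw [hc, hfloor (κ + 1), ← Int.natCast_div]
      norm_cast
      exact Nat.div_eq_of_lt_le (by omega) (by omega)
    have hgap : (κ : ℤ) + 1 + ⌊((κ : ℝ) + 1) * lam⌋ = (κ : ℤ) + ⌊(κ : ℝ) * lam⌋ + 2 := by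
      rw [hf1, hf2]; ring
    rcases hyp κ hκ1 hgap with h | h
    · have hc : ((κ : ℝ) + 1) = ((κ + 1 : ℕ) : ℝ) := by push_cast; ring
      rw [hc] at h
      have := Nat.le_of_dvd (by omega) (hdvd (κ + 1) h)
      omega
    · have := Nat.le_of_dvd (by omega) (hdvd κ h)
      omega
  refine ⟨q, by omega, ?_⟩
  rw [hlampq, hp1]; norm_num
end
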